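/- Let ψ_cat = (Φ + V_{Γ̃_{y₀}} Φ) / ‖Φ + V_{Γ̃_{y₀}} Φ‖ (the denominator is nonzero). Then for every integer T ≥ 3, every choice of T distinct columns x_1, …, x_T ∈ ZMod L_x, every row y₀ ∈ ZMod L_y, and every valid input a : Fin T → {0,1} with ∑_j a_j even, the winning probability satisfies p(ψ_cat, a) = 1; that is, the quantum strategy based on the topological cat state wins the toric code game with certainty. -/

import Mathlib

open Finset

noncomputable section

/-- The Hilbert space of qubits at the elements of `ι`. -/
abbrev QubitSpace (ι : Type*) := (ι → ZMod 2) → ℂ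

/-- Indicator function of a finset, valued in `ZMod 2`. -/
def indicZ2 {ι : Type*} [DecidableEq ι] (S : Finset ι) : ι → ZMod 2 :=
  fun b => if b ∈ S then 1 else 0

/-- The Z-type operator `W_S`. -/
def Wop {ι : Type*} [DecidableEq ι] (S : Finset ι) :
    Module.End ℂ (QubitSpace ι) where
  toFun ψ := fun σ => (-1 : ℂ) ^ (∑ b ∈ S, σ b).val * ψ σ
  map_add' ψ φ := by funext σ; simp [mul_add]
  map_smul' c ψ := by funext σ; simp; ring

/-- The X-type operator `V_S`. -/
def Vop {ι : Type*} [DecidableEq ι] (S : Finset ι) :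
    Module.End ℂ (QubitSpace ι) where
  toFun ψ := fun σ => ψ (σ + indicZ2 S)
  map_add' _ _ := rfl
  map_smul' _ _ := rfl

/-- The inner product `⟨ψ, φ⟩ = ∑_σ conj (ψ σ) · φ σ`. -/
def qInner {ι : Type*} [Fintype ι] [DecidableEq ι] (ψ φ : QubitSpace ι) : ℂ :=
  ∑ σ, (starRingEnd ℂ) (ψ σ) * φ σ

/-- Square root of an involution: `W^{1/2} = (1/2)(1+W) + (i/2)(1−W)`. -/
def sqrtInv {E : Type*} [AddCommGroup E] [Module ℂ E] (W : Module.End ℂ E) :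
    Module.End ℂ E :=
  ((2 : ℂ)⁻¹) • (1 + W) + (Complex.I * (2 : ℂ)⁻¹) • (1 - W)

/-- `W^{a/2}` for `a ∈ {0,1}`: the identity if `a = 0`, `W^{1/2}` if `a = 1`. -/
def halfPow {E : Type*} [AddCommGroup E] [Module ℂ E] (W : Module.End ℂ E)
    (a : ℕ) : Module.End ℂ E :=
  if a = 0 then 1 else sqrtInv W

/-- The post-strategy state `ψ' = (∏_j W_{Γ_j}^{a_j/2}) ψ` (the factors are
commuting diagonal operators, so the order of the product is immaterial). -/
def postState {ι : Type*} [DecidableEq ι] {T : ℕ} (Γ : Fin T → Finset ι)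
    (a : Fin T → ℕ) (ψ : QubitSpace ι) : QubitSpace ι :=
  ((List.ofFn fun j => halfPow (Wop (Γ j)) (a j)).prod) ψ

/-- The X-basis vector `χ_y(σ) = 2^{−|ι|/2} (−1)^{∑_b σ(b)·y(b)}`. -/
def chi {ι : Type*} [Fintype ι] (y : ι → ZMod 2) : QubitSpace ι :=
  fun σ => (((Real.sqrt 2 ^ Fintype.card ι)⁻¹ : ℝ) : ℂ) *
    (-1 : ℂ) ^ (∑ b, (σ b).val * (y b).val)

/-- `r = ((∑_j a_j)/2) mod 2 ∈ ZMod 2`. -/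
def rOf {T : ℕ} (a : Fin T → ℕ) : ZMod 2 := (((∑ j, a j) / 2 : ℕ) : ZMod 2)

/-- The winning probability on input `a`:
`p(ψ, a) = ∑_{y : ∑_{b ∈ Γ̃} y b = r} |⟨χ_y, ψ'⟩|²`. -/
def winProb {ι : Type*} [Fintype ι] [DecidableEq ι] {T : ℕ}
    (Γ : Fin T → Finset ι) (Γt : Finset ι) (a : Fin T → ℕ)
    (ψ : QubitSpace ι) : ℝ :=
  ∑ y ∈ univ.filter (fun y : ι → ZMod 2 => ∑ b ∈ Γt, y b = rOf a),
    ‖qInner (chi y) (postState Γ a ψ)‖ ^ 2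

/-- The quantum winning probability: the average of `p(ψ, a)` over the
`2^{T−1}` valid inputs `a` (those with `∑_j a_j` even). -/
def quantumWinProb {ι : Type*} [Fintype ι] [DecidableEq ι] {T : ℕ}
    (Γ : Fin T → Finset ι) (Γt : Finset ι) (ψ : QubitSpace ι) : ℝ :=
  (∑ a ∈ univ.filter (fun a : Fin T → Fin 2 => Even (∑ j, (a j : ℕ))),
      winProb Γ Γt (fun j => (a j : ℕ)) ψ) / 2 ^ (T - 1)

/-- The computational basis vector `δ_σ`. -/
def deltaVec {ι : Type*} [DecidableEq (ι → ZMod 2)] (σ : ι → ZMod 2) :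
    QubitSpace ι :=
  fun τ => if τ = σ then 1 else 0

/-! ### The square lattice on the torus -/

variable (Lx Ly : ℕ)

/-- Vertices of the `L_x × L_y` square lattice on the torus. -/
abbrev Vertex := ZMod Lx × ZMod Ly

/-- Bonds of the lattice: `((x,y), 0)` is the horizontal bond from `(x,y)` to
`(x+1,y)`, and `((x,y), 1)` the vertical bond from `(x,y)` to `(x,y+1)`. -/
abbrev Bond := (ZMod Lx × ZMod Ly) × Fin 2

variable [NeZero Lx] [NeZero Ly]

/-- The vertical Wilson loop `Γ_x = {((x,y),1) : y}`. -/
def gammaV (x : ZMod Lx) : Finset (Bond Lx Ly) :=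
  univ.filter (fun b => b.1.1 = x ∧ b.2 = 1)

/-- The horizontal Wilson loop `Γ^h_y = {((x,y),0) : x}`. -/
def gammaH (y : ZMod Ly) : Finset (Bond Lx Ly) :=
  univ.filter (fun b => b.1.2 = y ∧ b.2 = 0)

/-- The horizontal dual loop `Γ̃_y = {((x,y),1) : x}`. -/
def dualH (y : ZMod Ly) : Finset (Bond Lx Ly) :=
  univ.filter (fun b => b.1.2 = y ∧ b.2 = 1)

/-- The vertical dual loop `Δ_x = {((x,y),0) : y}`. -/
def dualV (x : ZMod Lx) : Finset (Bond Lx Ly) :=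
  univ.filter (fun b => b.1.1 = x ∧ b.2 = 0)

/-- The plaquette `P(x,y) = {((x,y),0), ((x,y),1), ((x,y+1),0), ((x+1,y),1)}`. -/
def plaqSet (v : Vertex Lx Ly) : Finset (Bond Lx Ly) :=
  {(v, 0), (v, 1), ((v.1, v.2 + 1), 0), ((v.1 + 1, v.2), 1)}

/-- The star `S(x,y) = {((x,y),0), ((x,y),1), ((x−1,y),0), ((x,y−1),1)}`. -/
def starSet (v : Vertex Lx Ly) : Finset (Bond Lx Ly) :=
  {(v, 0), (v, 1), ((v.1 - 1, v.2), 0), ((v.1, v.2 - 1), 1)}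

/-- The plaquette operator `A_{(x,y)} = W_{P(x,y)}`. -/
def Aop (v : Vertex Lx Ly) : Module.End ℂ (QubitSpace (Bond Lx Ly)) :=
  Wop (plaqSet Lx Ly v)

/-- The star operator `B_{(x,y)} = V_{S(x,y)}`. -/
def Bop (v : Vertex Lx Ly) : Module.End ℂ (QubitSpace (Bond Lx Ly)) :=
  Vop (starSet Lx Ly v)

/-- The basis vector at the all-zeros configuration. -/
def delta0 : QubitSpace (Bond Lx Ly) := fun σ => if σ = 0 then 1 else 0

/-- The star projector `(1/2)(1 + B_v)`. -/
def starProj (v : Vertex Lx Ly) : Module.End ℂ (QubitSpace (Bond Lx Ly)) :=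
  ((2 : ℂ)⁻¹) • (1 + Bop Lx Ly v)

lemma vop_commute {ι : Type*} [DecidableEq ι] (S T : Finset ι) :
    Commute (Vop S) (Vop T) := by
  apply LinearMap.ext; intro ψ; funext σ
  simp only [Module.End.mul_apply]
  show ψ (σ + indicZ2 S + indicZ2 T) = ψ (σ + indicZ2 T + indicZ2 S)
  rw [add_right_comm]

lemma starProj_commute (v w : Vertex Lx Ly) :
    Commute (starProj Lx Ly v) (starProj Lx Ly w) := by
  have h : Commute (Bop Lx Ly v) (Bop Lx Ly w) := vop_commute _ _
  have h1 : Commute (1 + Bop Lx Ly v) (1 + Bop Lx Ly w) :=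
    (Commute.one_left _).add_left (((Commute.one_right _).add_right h))
  exact (h1.smul_left _).smul_right _

/-- The (unnormalized) zero-flux ground state
`Φ = (∏_v (1/2)(1 + B_v)) δ₀` (the star projectors commute, so the product
is well-defined). -/
def Phi : QubitSpace (Bond Lx Ly) :=
  (Finset.univ.noncommProd (fun v : Vertex Lx Ly => starProj Lx Ly v)
    (fun v _ w _ _ => starProj_commute Lx Ly v w)) (delta0 Lx Ly)

/-- The norm induced by the inner product. -/
def qNorm {ι : Type*} [Fintype ι] [DecidableEq ι] (ψ : QubitSpace ι) : ℝ :=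
  Real.sqrt (qInner ψ ψ).re

/-- The normalized topological cat state
`ψ_cat = (Φ + V_{Γ̃_{y₀}} Φ) / ‖Φ + V_{Γ̃_{y₀}} Φ‖`. -/
def psiCat (Lx Ly : ℕ) [NeZero Lx] [NeZero Ly] (y₀ : ZMod Ly) :
    QubitSpace (Bond Lx Ly) :=
  ((qNorm (Phi Lx Ly + Vop (dualH Lx Ly y₀) (Phi Lx Ly)) : ℝ) : ℂ)⁻¹ •
    (Phi Lx Ly + Vop (dualH Lx Ly y₀) (Phi Lx Ly))

/-!
Let `g = 𝟙_{Γ̃_{y₀}}`. A vertical loop `Γ_x` meets every star in an even number of bonds, so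
`W_{Γ_x}` commutes with the star projectors and fixes `Φ`; it meets `Γ̃_{y₀}` in a single bond,
so `W_{Γ_x}` anticommutes with `V_g` and `V_g Φ` is a `-1` eigenvector. The strategy therefore
maps `ψ_cat ∝ Φ + V_g Φ` to `ψ' ∝ Φ + i^{∑ a} V_g Φ = Φ + (-1)^r V_g Φ`, a `(-1)^r` eigenvector
of `V_g`, of norm one because `Φ ⊥ V_g Φ` (eigenvectors of `W_{Γ_0}` for `±1`). Each `χ_y` is a
`V_g` eigenvector for `(-1)^{∑_{Γ̃} y}`, so `⟨χ_y, ψ'⟩ = 0` unless `∑_{Γ̃} y = r`, and by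
Parseval the winning outcomes carry all of `‖ψ'‖² = 1`. The normalisation is nonzero because `Φ`
is entrywise nonnegative with `Φ(0) > 0`.
-/

open scoped ComplexOrder ComplexConjugate
open Complex

section Sign

def zsign (s : ZMod 2) : ℂ := (-1) ^ s.val

@[simp] lemma zsign_zero : zsign 0 = 1 := rfl

@[simp] lemma zsign_one : zsign 1 = -1 := by simp [zsign, ZMod.val_one]

lemma zsign_add (s t : ZMod 2) : zsign (s + t) = zsign s * zsign t := by
  rw [zsign, ZMod.val_add, ← neg_one_pow_eq_pow_mod_two, pow_add]; rfl

lemma zsign_sum {β : Type*} (s : Finset β) (f : β → ZMod 2) :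
    zsign (∑ b ∈ s, f b) = ∏ b ∈ s, zsign (f b) := by
  classical
  induction s using Finset.cons_induction with
  | empty => simp
  | cons a s ha ih => rw [Finset.sum_cons, Finset.prod_cons, zsign_add, ih]

lemma zsign_natCast (n : ℕ) : zsign n = (-1) ^ n := by
  rw [zsign, ZMod.val_natCast, ← neg_one_pow_eq_pow_mod_two]

lemma zsign_mul_self (s : ZMod 2) : zsign s * zsign s = 1 := by
  rw [← zsign_add, CharTwo.add_self_eq_zero, zsign_zero]

lemma conj_zsign (s : ZMod 2) : conj (zsign s) = zsign s := by
  simp [zsign]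

lemma zsign_mul_zsign_of_ne {s t : ZMod 2} (h : s ≠ t) : zsign s * zsign t = -1 := by
  have hst : s + t = 1 := by revert s t; decide
  rw [← zsign_add, hst, zsign_one]

lemma I_pow_eq_zsign_rOf {T : ℕ} {a : Fin T → ℕ} (h : Even (∑ j, a j)) :
    I ^ (∑ j, a j) = zsign (rOf a) := by
  obtain ⟨m, hm⟩ := h
  rw [rOf, hm, ← two_mul, Nat.mul_div_cancel_left m two_pos, zsign_natCast, pow_mul, I_sq]

end Sign

section Operators

variable {ι : Type*} [DecidableEq ι]

lemma Wop_apply (S : Finset ι) (ψ : QubitSpace ι) (σ : ι → ZMod 2) :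
    Wop S ψ σ = zsign (∑ b ∈ S, σ b) * ψ σ := rfl

lemma Vop_apply (S : Finset ι) (ψ : QubitSpace ι) (σ : ι → ZMod 2) :
    Vop S ψ σ = ψ (σ + indicZ2 S) := rfl

lemma Vop_Vop (S : Finset ι) (ψ : QubitSpace ι) : Vop S (Vop S ψ) = ψ := by
  have h : indicZ2 S + indicZ2 S = 0 := funext fun _ => CharTwo.add_self_eq_zero _
  funext σ
  simp only [Vop_apply, add_assoc, h, add_zero]

lemma sum_indicZ2 (Γ S : Finset ι) : ∑ b ∈ Γ, indicZ2 S b = #(Γ ∩ S) := by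
  simp [indicZ2, Finset.sum_ite_mem]

lemma Vop_Wop (S T : Finset ι) (ψ : QubitSpace ι) :
    Vop T (Wop S ψ) = zsign #(S ∩ T) • Wop S (Vop T ψ) := by
  funext σ
  simp only [Vop_apply, Wop_apply, Pi.smul_apply, smul_eq_mul, Pi.add_apply,
    Finset.sum_add_distrib, zsign_add, sum_indicZ2]
  ring

lemma commute_Wop_Vop_of_even {S T : Finset ι} (h : Even #(S ∩ T)) :
    Commute (Wop S) (Vop T) :=
  LinearMap.ext fun ψ => by
    rw [Module.End.mul_apply, Module.End.mul_apply, Vop_Wop,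
      ZMod.natCast_eq_zero_iff_even.mpr h, zsign_zero, one_smul]

lemma Wop_Vop_eq_neg {S T : Finset ι} (h : #(S ∩ T) = 1) {ψ : QubitSpace ι}
    (hψ : Wop S ψ = ψ) : Wop S (Vop T ψ) = -Vop T ψ := by
  have := Vop_Wop S T ψ
  rw [hψ, h, Nat.cast_one, zsign_one, neg_one_smul] at this
  exact neg_eq_iff_eq_neg.mp this.symm

lemma half_one_add_Vop_nonneg_and_pos_zero (S : Finset ι)
    {ψ : QubitSpace ι} (h0 : 0 ≤ ψ) (hpos : 0 < ψ 0) :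
    0 ≤ ((2 : ℂ)⁻¹ • (1 + Vop S)) ψ ∧ 0 < ((2 : ℂ)⁻¹ • (1 + Vop S)) ψ 0 := by
  refine ⟨fun σ => ?_, ?_⟩
  · have : 0 ≤ ψ σ := h0 σ
    have : 0 ≤ ψ (σ + indicZ2 S) := h0 _
    show 0 ≤ 2⁻¹ * (ψ σ + ψ (σ + indicZ2 S))
    positivity
  · have : 0 ≤ ψ (0 + indicZ2 S) := h0 _
    show 0 < 2⁻¹ * (ψ 0 + ψ (0 + indicZ2 S))
    positivity

end Operators

section HalfPow

variable {E : Type*} [AddCommGroup E] [Module ℂ E] {W : Module.End ℂ E} {v : E}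

lemma halfPow_apply_of_eq_self (a : ℕ) (h : W v = v) : halfPow W a v = v := by
  unfold halfPow sqrtInv
  split_ifs
  · rfl
  · simp only [LinearMap.add_apply, LinearMap.smul_apply, LinearMap.sub_apply,
      Module.End.one_apply, h, sub_self, smul_zero, add_zero]
    rw [← two_smul ℂ v, smul_smul]
    norm_num

lemma halfPow_apply_of_eq_neg {a : ℕ} (ha : a ≤ 1) (h : W v = -v) :
    halfPow W a v = I ^ a • v := by
  unfold halfPow sqrtInv
  rcases Nat.le_one_iff_eq_zero_or_eq_one.mp ha with rfl | rfl
  · simp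
  · simp only [one_ne_zero, if_false, LinearMap.add_apply, LinearMap.smul_apply,
      LinearMap.sub_apply, Module.End.one_apply, h, add_neg_cancel, smul_zero,
      zero_add, sub_neg_eq_add, pow_one]
    rw [← two_smul ℂ v, smul_smul]
    congr 1
    ring

lemma prod_ofFn_apply_of_eq_smul {T : ℕ} (F : Fin T → Module.End ℂ E) (c : Fin T → ℂ)
    (h : ∀ j, F j v = c j • v) : (List.ofFn F).prod v = (∏ j, c j) • v := by
  induction T with
  | zero => simp
  | succ T ih =>
    rw [List.ofFn_succ, List.prod_cons, Module.End.mul_apply,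
      ih (fun j => F j.succ) (fun j => c j.succ) (fun j => h j.succ), map_smul, h,
      smul_smul, Fin.prod_univ_succ, mul_comm]

end HalfPow

section InnerProduct

variable {ι : Type*} [Fintype ι] [DecidableEq ι]

lemma qInner_add_left (u v w : QubitSpace ι) :
    qInner (u + v) w = qInner u w + qInner v w := by
  simp only [qInner, Pi.add_apply, map_add, add_mul, Finset.sum_add_distrib]

lemma qInner_add_right (u v w : QubitSpace ι) :
    qInner u (v + w) = qInner u v + qInner u w := by
  simp only [qInner, Pi.add_apply, mul_add, Finset.sum_add_distrib]

lemma qInner_smul_left (c : ℂ) (u v : QubitSpace ι) :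
    qInner (c • u) v = conj c * qInner u v := by
  simp only [qInner, Pi.smul_apply, smul_eq_mul, map_mul, Finset.mul_sum, mul_assoc]

lemma qInner_smul_right (c : ℂ) (u v : QubitSpace ι) :
    qInner u (c • v) = c * qInner u v := by
  simp only [qInner, Pi.smul_apply, smul_eq_mul, Finset.mul_sum]
  exact Finset.sum_congr rfl fun _ _ => by ring

lemma conj_qInner (u v : QubitSpace ι) : conj (qInner u v) = qInner v u := by
  simp only [qInner, map_sum, map_mul, conj_conj]
  exact Finset.sum_congr rfl fun _ _ => mul_comm _ _

lemma qInner_self (φ : QubitSpace ι) : qInner φ φ = ((∑ σ, normSq (φ σ) : ℝ) : ℂ) := by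
  simp only [qInner, ofReal_sum, normSq_eq_conj_mul_self]

lemma qNorm_ne_zero {φ : QubitSpace ι} {σ : ι → ZMod 2} (h : φ σ ≠ 0) : qNorm φ ≠ 0 := by
  rw [qNorm, qInner_self, ofReal_re]
  refine (Real.sqrt_pos.mpr ?_).ne'
  exact Finset.sum_pos' (fun τ _ => normSq_nonneg _) ⟨σ, Finset.mem_univ _, normSq_pos.mpr h⟩

lemma qInner_normalize_self {φ : QubitSpace ι} (h : qNorm φ ≠ 0) :
    qInner ((qNorm φ : ℂ)⁻¹ • φ) ((qNorm φ : ℂ)⁻¹ • φ) = 1 := by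
  have hsq : (qNorm φ : ℂ) ^ 2 = qInner φ φ := by
    rw [qNorm, qInner_self, ofReal_re, ← ofReal_pow,
      Real.sq_sqrt (Finset.sum_nonneg fun _ _ => normSq_nonneg _)]
  rw [qInner_smul_left, qInner_smul_right, ← hsq, map_inv₀, conj_ofReal]
  field_simp [ofReal_ne_zero.mpr h]

lemma qInner_add_smul_self {u v : QubitSpace ι} {ε : ℂ} (h : qInner u v = 0)
    (hε : conj ε * ε = 1) :
    qInner (u + ε • v) (u + ε • v) = qInner u u + qInner v v := by
  have h' : qInner v u = 0 := by rw [← conj_qInner, h, map_zero]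
  simp only [qInner_add_left, qInner_add_right, qInner_smul_left, qInner_smul_right, h, h']
  linear_combination qInner v v * hε

lemma qInner_Vop_Vop (S : Finset ι) (u v : QubitSpace ι) :
    qInner (Vop S u) (Vop S v) = qInner u v :=
  Fintype.sum_equiv (Equiv.addRight (indicZ2 S)) _ _ fun _ => rfl

lemma qInner_Wop_Wop (S : Finset ι) (u v : QubitSpace ι) :
    qInner (Wop S u) (Wop S v) = qInner u v := by
  refine Finset.sum_congr rfl fun σ _ => ?_
  rw [Wop_apply, Wop_apply, map_mul, conj_zsign]
  linear_combination conj (u σ) * v σ * zsign_mul_self (∑ b ∈ S, σ b)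

lemma qInner_eq_zero_of_eigen {A : Module.End ℂ (QubitSpace ι)}
    (hA : ∀ u v, qInner (A u) (A v) = qInner u v) {u v : QubitSpace ι} {s t : ℂ}
    (hu : A u = s • u) (hv : A v = t • v) (hst : conj s * t ≠ 1) : qInner u v = 0 := by
  have h := hA u v
  rw [hu, hv, qInner_smul_left, qInner_smul_right, ← mul_assoc] at h
  have h' : (conj s * t - 1) * qInner u v = 0 := by linear_combination h
  exact (mul_eq_zero.mp h').resolve_left (sub_ne_zero.mpr hst)

end InnerProduct

section XBasis

variable {ι : Type*} [Fintype ι]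

lemma chi_apply (y σ : ι → ZMod 2) :
    chi y σ = (((Real.sqrt 2 ^ Fintype.card ι)⁻¹ : ℝ) : ℂ) * zsign (∑ b, σ b * y b) := by
  have h : ∑ b, σ b * y b = ((∑ b, (σ b).val * (y b).val : ℕ) : ZMod 2) := by
    push_cast; simp only [ZMod.natCast_val, ZMod.cast_id', id]
  rw [chi, h, zsign_natCast]

lemma conj_chi (y σ : ι → ZMod 2) : conj (chi y σ) = chi y σ := by
  rw [chi_apply, map_mul, conj_ofReal, conj_zsign]

lemma Vop_chi [DecidableEq ι] (S : Finset ι) (y : ι → ZMod 2) :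
    Vop S (chi y) = zsign (∑ b ∈ S, y b) • chi y := by
  funext σ
  simp only [Vop_apply, chi_apply, Pi.smul_apply, smul_eq_mul, Pi.add_apply, add_mul,
    Finset.sum_add_distrib, zsign_add, indicZ2, ite_mul, one_mul, zero_mul,
    Finset.sum_ite_mem, Finset.univ_inter]
  ring

lemma sum_chi_mul_chi [DecidableEq ι] (σ τ : ι → ZMod 2) :
    ∑ y, chi y σ * chi y τ = if σ = τ then 1 else 0 := by
  have hc : (((Real.sqrt 2 ^ Fintype.card ι)⁻¹ : ℝ) : ℂ) ^ 2 = (2 ^ Fintype.card ι)⁻¹ := by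
    rw [← ofReal_pow, inv_pow, ← pow_mul, mul_comm, pow_mul, Real.sq_sqrt zero_le_two]
    push_cast; rfl
  have hterm : ∀ y, chi y σ * chi y τ =
      (2 ^ Fintype.card ι)⁻¹ * ∏ b, zsign ((σ b + τ b) * y b) := fun y => by
    rw [chi_apply, chi_apply, mul_mul_mul_comm, ← zsign_add, ← Finset.sum_add_distrib,
      zsign_sum, ← sq, hc]
    simp_rw [add_mul]
  have hfactor : ∀ b, ∑ t : ZMod 2, zsign ((σ b + τ b) * t) =
      if σ b + τ b = 0 then 2 else 0 := fun b => by
    rw [show (univ : Finset (ZMod 2)) = {0, 1} from rfl, Finset.sum_pair zero_ne_one,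
      mul_zero, mul_one, zsign_zero]
    rcases (by decide : ∀ s : ZMod 2, s = 0 ∨ s = 1) (σ b + τ b) with h | h <;>
      norm_num [h]
  rw [Finset.sum_congr rfl fun y _ => hterm y, ← Finset.mul_sum,
    ← Fintype.prod_sum (fun b t => zsign ((σ b + τ b) * t))]
  simp_rw [hfactor]
  simp only [Finset.prod_ite_zero, Finset.mem_univ, forall_const, CharTwo.add_eq_zero,
    ← funext_iff, Finset.prod_const, Finset.card_univ]
  split_ifs
  · exact inv_mul_cancel₀ (pow_ne_zero _ two_ne_zero)
  · rw [mul_zero]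

end XBasis

section WinningProbability

variable {ι : Type*} [Fintype ι] [DecidableEq ι]

lemma sum_normSq_qInner_chi (φ : QubitSpace ι) :
    ∑ y, normSq (qInner (chi y) φ) = (qInner φ φ).re := by
  have hexpand : ∀ y, (normSq (qInner (chi y) φ) : ℂ) =
      ∑ σ, ∑ τ, chi y σ * chi y τ * (conj (φ σ) * φ τ) := fun y => by
    simp only [normSq_eq_conj_mul_self, qInner, conj_chi, map_sum, map_mul,
      Finset.sum_mul_sum]
    exact Finset.sum_congr rfl fun _ _ => Finset.sum_congr rfl fun _ _ => by ring
  have hsum : (∑ y, (normSq (qInner (chi y) φ) : ℂ)) = qInner φ φ := by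
    calc ∑ y, (normSq (qInner (chi y) φ) : ℂ)
        = ∑ σ, ∑ τ, ∑ y, chi y σ * chi y τ * (conj (φ σ) * φ τ) := by
          simp_rw [hexpand]
          rw [Finset.sum_comm]
          exact Finset.sum_congr rfl fun _ _ => Finset.sum_comm
      _ = ∑ σ, ∑ τ, (if σ = τ then 1 else 0) * (conj (φ σ) * φ τ) := by
          simp_rw [← Finset.sum_mul, sum_chi_mul_chi]
      _ = qInner φ φ := by simp [qInner]
  rw [← hsum, ← ofReal_sum, ofReal_re]

lemma qInner_chi_eq_zero {S : Finset ι} {r : ZMod 2} {y : ι → ZMod 2} {ψ : QubitSpace ι}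
    (hψ : Vop S ψ = zsign r • ψ) (hy : ∑ b ∈ S, y b ≠ r) : qInner (chi y) ψ = 0 :=
  qInner_eq_zero_of_eigen (qInner_Vop_Vop S) (Vop_chi S y) hψ
    (by rw [conj_zsign, zsign_mul_zsign_of_ne hy]; norm_num)

lemma winProb_eq_one {T : ℕ} {Γ : Fin T → Finset ι} {Γt : Finset ι} {a : Fin T → ℕ}
    {ψ : QubitSpace ι} (hsym : Vop Γt (postState Γ a ψ) = zsign (rOf a) • postState Γ a ψ)
    (hnorm : qInner (postState Γ a ψ) (postState Γ a ψ) = 1) : winProb Γ Γt a ψ = 1 := by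
  rw [winProb, Finset.sum_filter_of_ne fun y _ hy => ?_]
  · simp_rw [Complex.sq_norm, sum_normSq_qInner_chi, hnorm, one_re]
  · by_contra hne
    exact hy (by rw [qInner_chi_eq_zero hsym hne, norm_zero, sq, zero_mul])

end WinningProbability

section CatState

variable {ι : Type*} [DecidableEq ι]

lemma Vop_smul_add_zsign_smul_Vop (S : Finset ι) (u : QubitSpace ι) (c : ℂ) (r : ZMod 2) :
    Vop S (c • (u + zsign r • Vop S u)) = zsign r • c • (u + zsign r • Vop S u) := by
  rw [map_smul, map_add, map_smul, Vop_Vop, smul_comm (zsign r) c, smul_add (zsign r),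
    smul_smul, zsign_mul_self, one_smul, add_comm (zsign r • u)]

lemma qInner_self_smul_add_zsign_smul_Vop [Fintype ι] {S : Finset ι} {u : QubitSpace ι}
    (h : qInner u (Vop S u) = 0) (hn : qNorm (u + Vop S u) ≠ 0) (r : ZMod 2) :
    qInner ((qNorm (u + Vop S u) : ℂ)⁻¹ • (u + zsign r • Vop S u))
      ((qNorm (u + Vop S u) : ℂ)⁻¹ • (u + zsign r • Vop S u)) = 1 := by
  have h1 := qInner_add_smul_self (ε := 1) h (by simp)
  rw [one_smul] at h1
  rw [qInner_smul_left, qInner_smul_right,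
    qInner_add_smul_self h (by rw [conj_zsign, zsign_mul_self]), ← h1,
    ← qInner_smul_right, ← qInner_smul_left]
  exact qInner_normalize_self hn

end CatState

section Lattice

lemma card_gammaV_inter_dualH (x : ZMod Lx) (y₀ : ZMod Ly) :
    #(gammaV Lx Ly x ∩ dualH Lx Ly y₀) = 1 := by
  rw [Finset.card_eq_one]
  refine ⟨((x, y₀), 1), ?_⟩
  ext ⟨⟨u, w⟩, i⟩
  simp only [gammaV, dualH, Finset.mem_inter, Finset.mem_filter, Finset.mem_univ, true_and,
    Finset.mem_singleton, Prod.mk.injEq]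
  tauto

-- `2 ≤ L_y` keeps the two vertical bonds of a star distinct.
lemma even_card_gammaV_inter_starSet (hLy : 2 ≤ Ly) (x : ZMod Lx) (v : Vertex Lx Ly) :
    Even #(gammaV Lx Ly x ∩ starSet Lx Ly v) := by
  have : Fact (1 < Ly) := ⟨hLy⟩
  rw [Finset.inter_comm, starSet, gammaV, Finset.inter_filter, Finset.inter_univ]
  simp only [Finset.filter_insert, Finset.filter_singleton, zero_ne_one, and_false,
    and_true, if_false]
  split_ifs
  · have hne : v ≠ (v.1, v.2 - 1) := fun h =>
      one_ne_zero (sub_eq_self.mp (congrArg Prod.snd h).symm)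
    rw [Finset.card_insert_of_notMem (by simpa using hne), Finset.card_singleton]
    exact even_two
  · simp

lemma commute_Wop_gammaV_starProj (hLy : 2 ≤ Ly) (x : ZMod Lx) (v : Vertex Lx Ly) :
    Commute (Wop (gammaV Lx Ly x)) (starProj Lx Ly v) :=
  ((Commute.one_right _).add_right
    (commute_Wop_Vop_of_even (even_card_gammaV_inter_starSet Lx Ly hLy x v))).smul_right _

lemma Wop_gammaV_Phi (hLy : 2 ≤ Ly) (x : ZMod Lx) :
    Wop (gammaV Lx Ly x) (Phi Lx Ly) = Phi Lx Ly := by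
  have hδ : Wop (gammaV Lx Ly x) (delta0 Lx Ly) = delta0 Lx Ly := by
    funext σ
    by_cases h : σ = 0 <;> simp [Wop_apply, delta0, h]
  have h := Finset.noncommProd_commute univ (fun v => starProj Lx Ly v)
    (fun v _ w _ _ => starProj_commute Lx Ly v w) (Wop (gammaV Lx Ly x))
    fun v _ => commute_Wop_gammaV_starProj Lx Ly hLy x v
  exact (LinearMap.congr_fun h.eq (delta0 Lx Ly)).trans (congrArg _ hδ)

lemma Wop_gammaV_Vop_dualH_Phi (hLy : 2 ≤ Ly) (x : ZMod Lx) (y₀ : ZMod Ly) :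
    Wop (gammaV Lx Ly x) (Vop (dualH Lx Ly y₀) (Phi Lx Ly)) =
      -Vop (dualH Lx Ly y₀) (Phi Lx Ly) :=
  Wop_Vop_eq_neg (card_gammaV_inter_dualH Lx Ly x y₀) (Wop_gammaV_Phi Lx Ly hLy x)

lemma qInner_Phi_Vop_dualH_Phi (hLy : 2 ≤ Ly) (y₀ : ZMod Ly) :
    qInner (Phi Lx Ly) (Vop (dualH Lx Ly y₀) (Phi Lx Ly)) = 0 :=
  qInner_eq_zero_of_eigen (qInner_Wop_Wop (gammaV Lx Ly 0)) (s := 1) (t := -1)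
    (by rw [one_smul]; exact Wop_gammaV_Phi Lx Ly hLy 0)
    (by rw [neg_one_smul]; exact Wop_gammaV_Vop_dualH_Phi Lx Ly hLy 0 y₀) (by norm_num)

lemma Phi_nonneg_and_pos_zero : 0 ≤ Phi Lx Ly ∧ 0 < Phi Lx Ly 0 := by
  have hδ : 0 ≤ delta0 Lx Ly := fun σ => by
    by_cases h : σ = 0 <;> simp [delta0, h]
  refine Finset.noncommProd_induction _ _ _
    (fun A : Module.End ℂ (QubitSpace (Bond Lx Ly)) =>
      ∀ ψ, 0 ≤ ψ → 0 < ψ 0 → 0 ≤ A ψ ∧ 0 < A ψ 0)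
    (fun A B hA hB ψ h0 hpos => hA _ (hB ψ h0 hpos).1 (hB ψ h0 hpos).2)
    (fun ψ h0 hpos => ⟨h0, hpos⟩)
    (fun v _ _ => half_one_add_Vop_nonneg_and_pos_zero (starSet Lx Ly v))
    (delta0 Lx Ly) hδ (by simp [delta0])

lemma qNorm_Phi_add_Vop_dualH_Phi_ne_zero (y₀ : ZMod Ly) :
    qNorm (Phi Lx Ly + Vop (dualH Lx Ly y₀) (Phi Lx Ly)) ≠ 0 := by
  obtain ⟨h0, hpos⟩ := Phi_nonneg_and_pos_zero Lx Ly
  exact qNorm_ne_zero (σ := 0) (add_pos_of_pos_of_nonneg hpos (h0 _)).ne'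

lemma postState_psiCat (hLy : 2 ≤ Ly) (y₀ : ZMod Ly) {T : ℕ} (x : Fin T → ZMod Lx)
    {a : Fin T → ℕ} (ha : ∀ j, a j ≤ 1) (heven : Even (∑ j, a j)) :
    postState (fun j => gammaV Lx Ly (x j)) a (psiCat Lx Ly y₀) =
      (qNorm (Phi Lx Ly + Vop (dualH Lx Ly y₀) (Phi Lx Ly)) : ℂ)⁻¹ •
        (Phi Lx Ly + zsign (rOf a) • Vop (dualH Lx Ly y₀) (Phi Lx Ly)) := by
  have hΦ := prod_ofFn_apply_of_eq_smul _ (fun _ => 1) fun j => by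
    rw [one_smul]; exact halfPow_apply_of_eq_self (a j) (Wop_gammaV_Phi Lx Ly hLy (x j))
  have hVΦ := prod_ofFn_apply_of_eq_smul _ (fun j => I ^ a j) fun j =>
    halfPow_apply_of_eq_neg (ha j) (Wop_gammaV_Vop_dualH_Phi Lx Ly hLy (x j) y₀)
  rw [Finset.prod_const_one, one_smul] at hΦ
  rw [Finset.prod_pow_eq_pow_sum, I_pow_eq_zsign_rOf heven] at hVΦ
  rw [postState, psiCat, map_smul, map_add, hΦ, hVΦ]

end Lattice

theorem psiCat_wins_with_certainty_general (Lx Ly : ℕ) [NeZero Lx] [NeZero Ly]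
    (hLy : 2 ≤ Ly) (y₀ : ZMod Ly) :
    qNorm (Phi Lx Ly + Vop (dualH Lx Ly y₀) (Phi Lx Ly)) ≠ 0 ∧
      ∀ (T : ℕ), 3 ≤ T → ∀ x : Fin T → ZMod Lx, Function.Injective x →
        ∀ a : Fin T → ℕ, (∀ j, a j ≤ 1) → Even (∑ j, a j) →
          winProb (fun j => gammaV Lx Ly (x j)) (dualH Lx Ly y₀) a
            (psiCat Lx Ly y₀) = 1 := by
  have hn := qNorm_Phi_add_Vop_dualH_Phi_ne_zero Lx Ly y₀
  refine ⟨hn, fun T _ x _ a ha heven => ?_⟩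
  have hpost := postState_psiCat Lx Ly hLy y₀ x ha heven
  refine winProb_eq_one ?_ ?_ <;> rw [hpost]
  · exact Vop_smul_add_zsign_smul_Vop _ _ _ _
  · exact qInner_self_smul_add_zsign_smul_Vop (qInner_Phi_Vop_dualH_Phi Lx Ly hLy y₀) hn _

/-- the normalizing denominator is nonzero, and for every
`T ≥ 3`, all distinct columns `x_1, …, x_T`, every row `y₀` and every valid
input `a` (each `a j ∈ {0,1}` and `∑_j a_j` even), the quantum strategy based
on the topological cat state wins the toric code game with certainty:
`p(ψ_cat, a) = 1`. -/
theorem psiCat_wins_with_certainty (Lx Ly : ℕ) [NeZero Lx] [NeZero Ly]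
    (hLx : 2 ≤ Lx) (hLy : 2 ≤ Ly) (y₀ : ZMod Ly) :
    qNorm (Phi Lx Ly + Vop (dualH Lx Ly y₀) (Phi Lx Ly)) ≠ 0 ∧
      ∀ (T : ℕ), 3 ≤ T → ∀ x : Fin T → ZMod Lx, Function.Injective x →
        ∀ a : Fin T → ℕ, (∀ j, a j ≤ 1) → Even (∑ j, a j) →
          winProb (fun j => gammaV Lx Ly (x j)) (dualH Lx Ly y₀) a
            (psiCat Lx Ly y₀) = 1 :=
  psiCat_wins_with_certainty_general Lx Ly hLy y₀
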